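/- Let L be a factorial extendable language over the alphabet {0,1} that contains the words 10^k1 and 01^k0 for all k ∈ ℕ. Then L admits no S-adic expansion over a 2-letter alphabet: there is no sequence of non-erasing substitutions σ_n: {0,1}^* → {0,1}^*, other than sequences whose partial compositions σ_0⋯σ_{n-1} are all equal to the identity or the letter-exchange morphism, such that L = ∩_n (factorial closure of σ_0σ_1⋯σ_{n-1}({0,1}^*)). Equivalently, if L = ∩_n (factorial closure of σ_0⋯σ_{n-1}({0,1}^*)) for non-erasing substitutions σ_n on {0,1}, then for every n the composition σ_0⋯σ_{n-1} is either the identity or the morphism exchanging 0 and 1. -/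
import Mathlib


/-- A language is factorial if it contains all factors (infixes) of its elements. -/
def IsFactorial {A : Type*} (L : Set (List A)) : Prop :=
  ∀ w ∈ L, ∀ v, v <:+: w → v ∈ L

/-- The application of a substitution to a finite word. -/
def applyW {A B : Type*} (σ : A → List B) (w : List A) : List B :=
  w.flatMap σ

/-- The composition `σ_0 σ_1 ⋯ σ_{n-1}` of the first `n` substitutions of a directive
sequence, as a map on finite words. -/
def compSub {A : Type*} (σ : ℕ → A → List A) : ℕ → List A → List A
  | 0 => id
  | n + 1 => fun w => compSub σ n (applyW (σ n) w)

/-- Decomposition of an infix of an append. -/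
lemma infix_split {α : Type*} {s x y : List α} (h : s <:+: x ++ y) :
    s <:+: x ∨ s <:+: y ∨
      ∃ s₁ s₂, s = s₁ ++ s₂ ∧ s₁ ≠ [] ∧ s₂ ≠ [] ∧ s₁ <:+ x ∧ s₂ <+: y := by
  obtain ⟨p, q, hpq⟩ := h
  rw [List.append_assoc] at hpq
  rcases List.append_eq_append_iff.mp hpq with ⟨a, hx, hsq⟩ | ⟨c, _, hy⟩
  · rcases List.append_eq_append_iff.mp hsq with ⟨a₂, ha₂, hq⟩ | ⟨t, hs, hyt⟩
    · -- a = s ++ a₂, so s is a prefix of a, suffix part of x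
      left
      exact ⟨p, a₂, by rw [hx, ha₂, List.append_assoc]⟩
    · rcases eq_or_ne a [] with rfl | hA
      · right; left
        simp only [List.nil_append] at hs
        subst hs
        exact ⟨[], q, by simpa using hyt.symm⟩
      · rcases eq_or_ne t [] with rfl | ht
        · left
          rw [List.append_nil] at hs
          subst hs
          exact ⟨p, [], by simp [hx]⟩
        · right; right
          exact ⟨a, t, hs, hA, ht, ⟨p, hx.symm⟩, ⟨q, hyt.symm⟩⟩
  · right; left
    exact ⟨c, q, by rw [List.append_assoc, ← hy]⟩

/-- `z` is a concatenation of blocks `c^a` and nonempty blocks of `!c`. -/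
inductive Chunks (a : ℕ) (c : Bool) : List Bool → Prop
  | nil : Chunks a c []
  | cons_c {z} : Chunks a c z → Chunks a c (List.replicate a c ++ z)
  | cons_d {z} (m : ℕ) : 0 < m → Chunks a c z → Chunks a c (List.replicate m (!c) ++ z)

lemma chunks_no_prefix {a : ℕ} {c : Bool} {z : List Bool} (ha : 2 ≤ a)
    (hz : Chunks a c z) : ¬ ([c, !c] <+: z) := by
  induction hz with
  | nil => rintro ⟨t, ht⟩; simp at ht
  | @cons_c z' hz ih =>
    rintro ⟨t, ht⟩
    obtain ⟨k, rfl⟩ : ∃ k, a = 2 + k := ⟨a - 2, by omega⟩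
    simp only [show (2 + k) = k + 1 + 1 from by omega, List.replicate_succ,
      List.cons_append, List.cons.injEq] at ht
    simp at ht
  | @cons_d z' m hm hz ih =>
    rintro ⟨t, ht⟩
    obtain ⟨k, rfl⟩ : ∃ k, m = k + 1 := ⟨m - 1, by omega⟩
    simp only [List.replicate_succ, List.cons_append, List.cons.injEq] at ht
    simp at ht

lemma chunks_no_infix {a : ℕ} {c : Bool} {z : List Bool} (ha : 2 ≤ a)
    (hz : Chunks a c z) : ¬ ([!c, c, !c] <:+: z) := by
  induction hz with
  | nil => intro h; have := h.length_le; simp at this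
  | @cons_c z' hz ih =>
    intro h
    rcases infix_split h with h1 | h2 | ⟨s₁, s₂, hs, h1ne, h2ne, hsuf, hpre⟩
    · have : (!c) = c := List.eq_of_mem_replicate (h1.subset (by simp))
      simp at this
    · exact ih h2
    · cases s₁ with
      | nil => exact h1ne rfl
      | cons e s₁' =>
        have he : e = c :=
          List.eq_of_mem_replicate (hsuf.subset (by simp))
        have h0 : (!c) = e := by
          have := congrArg List.head? hs
          simpa using this
        rw [he] at h0; simp at h0
  | @cons_d z' m hm hz ih =>
    intro h
    rcases infix_split h with h1 | h2 | ⟨s₁, s₂, hs, h1ne, h2ne, hsuf, hpre⟩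
    · have : c = !c := List.eq_of_mem_replicate (h1.subset (by simp))
      simp at this
    · exact ih h2
    · have hall : ∀ e ∈ s₁, e = (!c) := fun e he =>
        List.eq_of_mem_replicate (hsuf.subset he)
      rcases s₁ with _ | ⟨e₁, _ | ⟨e₂, _ | ⟨e₃, rest⟩⟩⟩
      · exact h1ne rfl
      · -- s₁ = [e₁], s₂ = [c, !c]
        simp only [List.cons_append, List.nil_append, List.cons.injEq] at hs
        have hs₂ : s₂ = [c, !c] := hs.2.symm
        exact chunks_no_prefix ha hz (hs₂ ▸ hpre)
      · -- s₁ = [e₁, e₂], e₂ = c but all !c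
        have he₂ : e₂ = (!c) := hall e₂ (by simp)
        have h0 : c = e₂ := by
          have h2 := congrArg (fun l => l[1]?) hs
          simpa using h2
        rw [he₂] at h0; simp at h0
      · -- length ≥ 3 forces s₂ = []
        have hlen := congrArg List.length hs
        have hpos := List.length_pos_iff.mpr h2ne
        simp only [List.length_append, List.length_cons, List.length_nil] at hlen
        omega

lemma chunks_flatMap {τ : Bool → List Bool} {a : ℕ} {c : Bool}
    (h : ∀ b : Bool, τ b = List.replicate a c ∨ ∃ m, 0 < m ∧ τ b = List.replicate m (!c)) :
    ∀ w : List Bool, Chunks a c (w.flatMap τ) := by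
  intro w
  induction w with
  | nil => exact Chunks.nil
  | cons b w' ih =>
    rw [List.flatMap_cons]
    rcases h b with hb | ⟨m, hm, hb⟩
    · rw [hb]; exact Chunks.cons_c ih
    · rw [hb]; exact Chunks.cons_d m hm ih

lemma prefix_len {τ : Bool → List Bool} {c : Bool} (hτ : ∀ b, (!c) ∈ τ b)
    {w p : List Bool} (hp : p <+: w.flatMap τ) (hc : (!c) ∉ p) :
    p.length ≤ (τ false).length + (τ true).length := by
  cases w with
  | nil =>
    simp only [List.flatMap_nil, List.prefix_nil] at hp
    simp [hp]
  | cons b w' =>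
    by_contra hlen
    push_neg at hlen
    rw [List.flatMap_cons] at hp
    have hb : τ b <+: p := by
      refine List.prefix_of_prefix_length_le (List.prefix_append _ _) hp ?_
      cases b <;> omega
    exact hc (hb.subset (hτ b))

lemma infix_len {τ : Bool → List Bool} {c : Bool} (hτ : ∀ b, (!c) ∈ τ b) :
    ∀ (w : List Bool) {s : List Bool}, s <:+: w.flatMap τ → (!c) ∉ s →
      s.length ≤ 2 * ((τ false).length + (τ true).length) := by
  intro w
  induction w with
  | nil =>
    intro s h _
    rw [List.flatMap_nil, List.infix_nil] at h
    subst h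
    simp
  | cons b w' ih =>
    intro s h hc
    rw [List.flatMap_cons] at h
    rcases infix_split h with h1 | h2 | ⟨s₁, s₂, hs, h1ne, h2ne, hsuf, hpre⟩
    · have := h1.length_le
      cases b <;> omega
    · exact ih h2 hc
    · have l1 : s₁.length ≤ (τ false).length + (τ true).length := by
        have := hsuf.length_le
        cases b <;> omega
      have l2 : s₂.length ≤ (τ false).length + (τ true).length := by
        refine prefix_len hτ hpre fun hmem => hc ?_
        rw [hs]; exact List.mem_append.mpr (Or.inr hmem)
      rw [hs, List.length_append]
      omega

lemma compSub_eq_flatMap (σ : ℕ → Bool → List Bool) (n : ℕ) (w : List Bool) :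
    compSub σ n w = w.flatMap (fun b => compSub σ n [b]) := by
  induction n generalizing w with
  | zero => simp [compSub]
  | succ n ih =>
    show compSub σ n (applyW (σ n) w) = _
    rw [applyW, ih, List.flatMap_assoc]
    congr 1
    funext b
    show _ = compSub σ n (applyW (σ n) [b])
    rw [applyW, List.flatMap_singleton, ih]

lemma compSub_single_ne (σ : ℕ → Bool → List Bool) (hne : ∀ n b, σ n b ≠ [])
    (n : ℕ) (b : Bool) : compSub σ n [b] ≠ [] := by
  induction n generalizing b with
  | zero => simp [compSub]
  | succ n ih =>
    show compSub σ n (applyW (σ n) [b]) ≠ []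
    rw [applyW, List.flatMap_singleton, compSub_eq_flatMap]
    cases hσ : σ n b with
    | nil => exact absurd hσ (hne n b)
    | cons x xs =>
      rw [List.flatMap_cons]
      intro hnil
      rcases List.append_eq_nil_iff.mp hnil with ⟨h1, _⟩
      exact ih x h1

/-- A factorial extendable language on `{0,1}` containing `10^k1` and `01^k0` for all `k`
admits no `S`-adic expansion on a 2-letter alphabet: if it is the `S`-adic language of a
sequence of non-erasing substitutions on `{0,1}`, then every partial composition
`σ_0 ⋯ σ_{n-1}` is the identity or the exchange morphism. -/
theorem no_binary_Sadic_expansion (L : Set (List Bool))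
    (hfac : IsFactorial L)
    (hext : ∀ w ∈ L, ∃ a : Bool, w ++ [a] ∈ L)
    (hcontain : ∀ k : ℕ,
      [true] ++ List.replicate k false ++ [true] ∈ L ∧
      [false] ++ List.replicate k true ++ [false] ∈ L)
    (σ : ℕ → Bool → List Bool) (hne : ∀ n b, σ n b ≠ [])
    (hL : L = ⋂ n : ℕ, {v | ∃ w : List Bool, v <:+: compSub σ n w}) :
    ∀ n : ℕ,
      (compSub σ n [false] = [false] ∧ compSub σ n [true] = [true]) ∨
      (compSub σ n [false] = [true] ∧ compSub σ n [true] = [false]) := by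
  intro n
  set τ : Bool → List Bool := fun b => compSub σ n [b] with hτdef
  have hτne : ∀ b, τ b ≠ [] := fun b => compSub_single_ne σ hne n b
  have hτpos : ∀ b, 0 < (τ b).length := fun b => List.length_pos_iff.mpr (hτne b)
  have hmem : ∀ u ∈ L, ∃ w : List Bool, u <:+: w.flatMap τ := by
    intro u hu
    rw [hL] at hu
    obtain ⟨w, hw⟩ := Set.mem_iInter.mp hu n
    exact ⟨w, by rwa [compSub_eq_flatMap σ n w] at hw⟩
  have hwordL : ∀ (c : Bool) (k : ℕ), [!c] ++ List.replicate k c ++ [!c] ∈ L := by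
    intro c k
    cases c
    · simpa using (hcontain k).1
    · simpa using (hcontain k).2
  -- Step 1: for each letter c, some block is constant equal to c.
  have hconst : ∀ c : Bool, ∃ b : Bool, τ b = List.replicate (τ b).length c := by
    intro c
    by_contra hcon
    push_neg at hcon
    have hτc : ∀ b, (!c) ∈ τ b := by
      intro b
      have h1 : ¬ ∀ e ∈ τ b, e = c := by
        intro hall
        exact hcon b (List.eq_replicate_iff.mpr ⟨rfl, hall⟩)
      push_neg at h1
      obtain ⟨e, he, hec⟩ := h1
      have : e = !c := by cases c <;> cases e <;> simp_all
      exact this ▸ he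
    set K := (τ false).length + (τ true).length with hK
    obtain ⟨w, hw⟩ := hmem ([!c] ++ List.replicate (2 * K + 1) c ++ [!c])
      (hwordL c (2 * K + 1))
    have hrep : List.replicate (2 * K + 1) c <:+: w.flatMap τ :=
      (List.infix_append [!c] (List.replicate (2 * K + 1) c) [!c]).trans hw
    have hnotin : (!c) ∉ List.replicate (2 * K + 1) c := by
      intro h
      have := List.eq_of_mem_replicate h
      simp at this
    have := infix_len hτc w hrep hnotin
    simp only [List.length_replicate] at this
    omega
  obtain ⟨b0, hb0⟩ := hconst false
  obtain ⟨b1, hb1⟩ := hconst true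
  have hne01 : b0 ≠ b1 := by
    intro h
    subst h
    have hmem : false ∈ τ b0 := by
      rw [hb0]
      exact List.mem_replicate.mpr ⟨by have := hτpos b0; omega, rfl⟩
    rw [hb1] at hmem
    have := List.eq_of_mem_replicate hmem
    simp at this
  -- Step 2: forcing lengths to be 1 using the words 101 and 010.
  have force : ∀ (c : Bool) (a : ℕ),
      (∀ b : Bool, τ b = List.replicate a c ∨
        ∃ m, 0 < m ∧ τ b = List.replicate m (!c)) → a < 2 := by
    intro c a hch
    by_contra hge
    push_neg at hge
    obtain ⟨w, hw⟩ := hmem ([!c] ++ List.replicate 1 c ++ [!c]) (hwordL c 1)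
    have : [!c, c, !c] <:+: w.flatMap τ := by
      simpa using hw
    exact chunks_no_infix hge (chunks_flatMap hch w) this
  cases hb0c : b0
  · -- b0 = false : τ false all-false, τ true all-true (identity case)
    have hb1c : b1 = true := by
      cases hb1c : b1
      · rw [hb0c, hb1c] at hne01; simp at hne01
      · rfl
    rw [hb0c] at hb0
    rw [hb1c] at hb1
    have ha1 : (τ false).length = 1 := by
      have := force false (τ false).length (by
        intro b
        cases b
        · left; exact hb0
        · right; exact ⟨(τ true).length, hτpos true, by simpa using hb1⟩)
      have := hτpos false
      omega
    have hb1' : (τ true).length = 1 := by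
      have := force true (τ true).length (by
        intro b
        cases b
        · right; exact ⟨(τ false).length, hτpos false, by simpa using hb0⟩
        · left; exact hb1)
      have := hτpos true
      omega
    left
    constructor
    · show τ false = [false]
      rw [hb0, ha1]; rfl
    · show τ true = [true]
      rw [hb1, hb1']; rfl
  · -- b0 = true : τ true all-false, τ false all-true (exchange case)
    have hb1c : b1 = false := by
      cases hb1c : b1
      · rfl
      · rw [hb0c, hb1c] at hne01; simp at hne01
    rw [hb0c] at hb0
    rw [hb1c] at hb1
    have ha1 : (τ true).length = 1 := by
      have := force false (τ true).length (by
        intro b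
        cases b
        · right; exact ⟨(τ false).length, hτpos false, by simpa using hb1⟩
        · left; exact hb0)
      have := hτpos true
      omega
    have hb1' : (τ false).length = 1 := by
      have := force true (τ false).length (by
        intro b
        cases b
        · left; exact hb1
        · right; exact ⟨(τ true).length, hτpos true, by simpa using hb0⟩)
      have := hτpos false
      omega
    right
    constructor
    · show τ false = [true]
      rw [hb1, hb1']; rfl
    · show τ true = [false]
      rw [hb0, ha1]; rfl
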